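/- For positive integers p > q ≥ 0, the invariant subring of B = ℂ[x_1,x_2,y_1,y_2] under the torus action (x_1,x_2,y_1,y_2) ↦ (λ^{-p}ω^{-1}x_1, λ^{-p}ω^{-1}x_2, λ^{p+q}ω²y_1, λ^{p-q}y_2) with (λ,ω) ∈ ℂ* × (ℤ/(p−q)ℤ) equals the subalgebra generated by the monomials x_{α_1}x_{α_2}y_1y_2, y_1^p ∏_{ℓ=1}^{p+q} x_{α_ℓ}, and y_2^p ∏_{ℓ=1}^{p−q} x_{α_ℓ}, for all choices of indices α_ℓ ∈ {1,2}. -/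

import Mathlib

/-!
An invariant polynomial is a combination of invariant monomials `x₁^a x₂^b y₁^c y₂^d`, and the
torus scales such a monomial by `λ^((p+q)c + (p-q)d - p(a+b)) ω^(2c - (a+b))`. Taking `λ = 2, ω = 1`
and `λ = 1` with `ω` a primitive `(p-q)`-th root of unity, invariance means
`p(a+b) = (p+q)c + (p-q)d` and `a + b - 2c = (p-q)r` for some integer `r`. These force
`d - c = p r`, so after splitting off `min(c, d)` factors `x x y₁ y₂` what is left is a product of
`r` generators `y₂^p x^(p-q)` (if `r ≥ 0`) or of `-r` generators `y₁^p x^(p+q)` (if `r ≤ 0`).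
Conversely every generator has trivial weight.
-/

open MvPolynomial

namespace Stmt14

noncomputable abbrev B := MvPolynomial (Fin 4) ℂ

/-- `x 0 = x₁`, `x 1 = x₂`. -/
noncomputable def x (j : Fin 2) : B := X ⟨(j : ℕ), by omega⟩
noncomputable def y1 : B := X 2
noncomputable def y2 : B := X 3

/-- The algebra endomorphism of `ℂ[x₁,x₂,y₁,y₂]` scaling the variables by
`(λ^{-p}ω^{-1}, λ^{-p}ω^{-1}, λ^{p+q}ω², λ^{p-q})`. -/
noncomputable def act (p q : ℕ) (u w : ℂˣ) : B →ₐ[ℂ] B :=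
  aeval fun i =>
    (![((u⁻¹ : ℂˣ) : ℂ) ^ p * ((w⁻¹ : ℂˣ) : ℂ),
       ((u⁻¹ : ℂˣ) : ℂ) ^ p * ((w⁻¹ : ℂˣ) : ℂ),
       ((u : ℂˣ) : ℂ) ^ (p + q) * ((w : ℂˣ) : ℂ) ^ 2,
       ((u : ℂˣ) : ℂ) ^ (p - q)] i) • X i

end Stmt14

theorem MvPolynomial.coeff_aeval_smul_X {σ R : Type*} [CommSemiring R] (s : σ → R)
    (f : MvPolynomial σ R) (m : σ →₀ ℕ) :
    coeff m (aeval (fun i => s i • X i) f) = (m.prod fun i k => s i ^ k) * coeff m f := by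
  classical
  induction f using MvPolynomial.induction_on' with
  | monomial d r =>
    have : aeval (fun i => s i • X i) (monomial d r) =
        C ((d.prod fun i k => s i ^ k) * r) * monomial d 1 := by
      rw [aeval_monomial, ← prod_X_pow_eq_monomial, C_mul, algebraMap_eq, map_finsuppProd]
      simp only [smul_eq_C_mul, mul_pow, ← map_pow, Finsupp.prod, Finset.prod_mul_distrib]
      ring
    rw [this, coeff_C_mul, coeff_monomial, coeff_monomial]
    split_ifs with h
    · rw [h, mul_one]
    · rw [mul_zero, mul_zero]
  | add f g hf hg => simp only [map_add, coeff_add, hf, hg, mul_add]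

theorem IsPrimitiveRoot.intCast_dvd_sub_of_pow_eq_pow {K : Type*} [Field K] {ζ : K}
    {k m n : ℕ} (hζ : IsPrimitiveRoot ζ k) (hk : k ≠ 0) (h : ζ ^ m = ζ ^ n) :
    (k : ℤ) ∣ n - m := by
  have hζ0 : ζ ≠ 0 := hζ.ne_zero hk
  rw [← hζ.zpow_eq_one_iff_dvd, zpow_sub₀ hζ0, div_eq_one_iff_eq (zpow_ne_zero _ hζ0)]
  exact_mod_cast h.symm

namespace Stmt14

section Weights

noncomputable def weight (p q : ℕ) (u w : ℂˣ) : Fin 4 → ℂ :=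
  ![((u⁻¹ : ℂˣ) : ℂ) ^ p * ((w⁻¹ : ℂˣ) : ℂ),
    ((u⁻¹ : ℂˣ) : ℂ) ^ p * ((w⁻¹ : ℂˣ) : ℂ),
    ((u : ℂˣ) : ℂ) ^ (p + q) * ((w : ℂˣ) : ℂ) ^ 2,
    ((u : ℂˣ) : ℂ) ^ (p - q)]

variable {p q : ℕ} {u w : ℂˣ}

theorem act_eq_aeval : act p q u w = aeval fun i => weight p q u w i • X i := rfl

theorem coeff_act (f : B) (m : Fin 4 →₀ ℕ) :
    coeff m (act p q u w f) =
      (weight p q u w 0 ^ (m 0 + m 1) * weight p q u w 2 ^ m 2 * weight p q u w 3 ^ m 3) *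
        coeff m f := by
  rw [act_eq_aeval, coeff_aeval_smul_X, Finsupp.prod_fintype _ _ fun _ => pow_zero _,
    Fin.prod_univ_four, pow_add]
  rfl

theorem act_x (j : Fin 2) : act p q u w (x j) = weight p q u w 0 • x j := by
  fin_cases j <;> simp [act, x, weight]

theorem act_y1 : act p q u w y1 = weight p q u w 2 • y1 := by
  simp [act, y1, weight]

theorem act_y2 : act p q u w y2 = weight p q u w 3 • y2 := by
  simp [act, y2, weight]

theorem weight_x_sq_mul_weight_y1_mul_weight_y2 (hqp : q ≤ p) :
    weight p q u w 0 ^ 2 * (weight p q u w 2 * weight p q u w 3) = 1 := by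
  have hu : (u : ℂ) ≠ 0 := u.ne_zero
  have hw : (w : ℂ) ≠ 0 := w.ne_zero
  simp only [weight, Units.val_inv_eq_inv_val, Matrix.cons_val, mul_pow, inv_pow]
  field_simp
  rw [← pow_add, ← pow_mul, show p + q + (p - q) = p * 2 by omega]

theorem weight_x_pow_mul_weight_y1_pow (hqp : q ≤ p) (hw : (w : ℂ) ^ (p - q) = 1) :
    weight p q u w 0 ^ (p + q) * weight p q u w 2 ^ p = 1 := by
  have hu : (u : ℂ) ≠ 0 := u.ne_zero
  have hw0 : (w : ℂ) ≠ 0 := w.ne_zero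
  simp only [weight, Units.val_inv_eq_inv_val, Matrix.cons_val, mul_pow, inv_pow]
  field_simp
  rw [← pow_mul, ← pow_mul, ← pow_mul, mul_comm (p + q) p,
    show 2 * p = p + q + (p - q) by omega, pow_add, hw, mul_one]

theorem weight_x_pow_mul_weight_y2_pow (hw : (w : ℂ) ^ (p - q) = 1) :
    weight p q u w 0 ^ (p - q) * weight p q u w 3 ^ p = 1 := by
  have hu : (u : ℂ) ≠ 0 := u.ne_zero
  have hw0 : (w : ℂ) ≠ 0 := w.ne_zero
  simp only [weight, Units.val_inv_eq_inv_val, Matrix.cons_val, mul_pow, inv_pow]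
  field_simp
  rw [hw, ← pow_mul, ← pow_mul, mul_comm, mul_one]

end Weights

def xMonomials (n : ℕ) : Set B := {f | ∃ α : Fin n → Fin 2, f = ∏ ℓ, x (α ℓ)}

theorem exists_mul_of_mem_xMonomials_add {m n : ℕ} {f : B} (hf : f ∈ xMonomials (m + n)) :
    ∃ g ∈ xMonomials m, ∃ h ∈ xMonomials n, f = g * h := by
  obtain ⟨α, rfl⟩ := hf
  exact ⟨_, ⟨α ∘ Fin.castAdd n, rfl⟩, _, ⟨α ∘ Fin.natAdd m, rfl⟩, Fin.prod_univ_add _⟩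

theorem x_zero_pow_mul_x_one_pow_mem_xMonomials (a b : ℕ) :
    x 0 ^ a * x 1 ^ b ∈ xMonomials (a + b) :=
  ⟨Fin.append (fun _ => 0) (fun _ => 1), by simp [Fin.prod_univ_add]⟩

theorem act_of_mem_xMonomials {p q : ℕ} {u w : ℂˣ} {n : ℕ} {f : B} (hf : f ∈ xMonomials n) :
    act p q u w f = weight p q u w 0 ^ n • f := by
  obtain ⟨α, rfl⟩ := hf
  simp only [map_prod, act_x, Finset.prod_smul, Finset.prod_const, Finset.card_univ,
    Fintype.card_fin]

def generators (p q : ℕ) : Set B :=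
  {f : B | ∃ α : Fin 2 → Fin 2, f = x (α 0) * x (α 1) * y1 * y2} ∪
    {f : B | ∃ α : Fin (p + q) → Fin 2, f = y1 ^ p * ∏ ℓ, x (α ℓ)} ∪
    {f : B | ∃ α : Fin (p - q) → Fin 2, f = y2 ^ p * ∏ ℓ, x (α ℓ)}

theorem x_mul_x_mul_y1_mul_y2 (α : Fin 2 → Fin 2) :
    x (α 0) * x (α 1) * y1 * y2 = (∏ ℓ, x (α ℓ)) * (y1 * y2) := by
  rw [Fin.prod_univ_two, mul_assoc _ y1]

section Invariance

variable {p q : ℕ} {u w : ℂˣ}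

theorem act_mul_eq_self_of_mem_xMonomials {n : ℕ} {f z : B} {c : ℂ} (hf : f ∈ xMonomials n)
    (hz : act p q u w z = c • z) (hc : weight p q u w 0 ^ n * c = 1) :
    act p q u w (f * z) = f * z := by
  rw [map_mul, act_of_mem_xMonomials hf, hz, smul_mul_smul_comm, hc, one_smul]

theorem act_eq_self_of_mem_generators (hqp : q ≤ p) (hw : (w : ℂ) ^ (p - q) = 1) {f : B}
    (hf : f ∈ generators p q) : act p q u w f = f := by
  rcases hf with (⟨α, rfl⟩ | ⟨α, rfl⟩) | ⟨α, rfl⟩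
  · rw [x_mul_x_mul_y1_mul_y2]
    refine act_mul_eq_self_of_mem_xMonomials ⟨α, rfl⟩ ?_
      (weight_x_sq_mul_weight_y1_mul_weight_y2 hqp)
    rw [map_mul, act_y1, act_y2, smul_mul_smul_comm]
  · rw [mul_comm]
    refine act_mul_eq_self_of_mem_xMonomials ⟨α, rfl⟩ ?_
      (weight_x_pow_mul_weight_y1_pow hqp hw)
    rw [map_pow, act_y1, smul_pow]
  · rw [mul_comm]
    refine act_mul_eq_self_of_mem_xMonomials ⟨α, rfl⟩ ?_ (weight_x_pow_mul_weight_y2_pow hw)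
    rw [map_pow, act_y2, smul_pow]

theorem adjoin_generators_le_equalizer (hqp : q ≤ p) (hw : (w : ℂ) ^ (p - q) = 1) :
    Algebra.adjoin ℂ (generators p q) ≤ AlgHom.equalizer (act p q u w) (AlgHom.id ℂ B) :=
  Algebra.adjoin_le fun _ hf => act_eq_self_of_mem_generators hqp hw hf

theorem exponents_of_mem_support (hqp : q < p) {f : B}
    (hf : ∀ u w : ℂˣ, (w : ℂ) ^ (p - q) = 1 → act p q u w f = f) {m : Fin 4 →₀ ℕ}
    (hm : m ∈ f.support) :
    p * (m 0 + m 1) = (p + q) * m 2 + (p - q) * m 3 ∧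
      ((p - q : ℕ) : ℤ) ∣ (m 0 + m 1 : ℕ) - 2 * m 2 := by
  have hweight : ∀ u w : ℂˣ, (w : ℂ) ^ (p - q) = 1 →
      weight p q u w 0 ^ (m 0 + m 1) * weight p q u w 2 ^ m 2 * weight p q u w 3 ^ m 3 = 1 :=
    fun u w hw => (mul_eq_right₀ (mem_support_iff.mp hm)).mp (by rw [← coeff_act, hf u w hw])
  constructor
  · have h := hweight (Units.mk0 2 two_ne_zero) 1 (one_pow _)
    simp only [weight, Matrix.cons_val, Units.val_inv_eq_inv_val, Units.val_mk0, Units.val_one,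
      inv_one, one_pow, mul_one, inv_pow, ← pow_mul] at h
    rw [mul_assoc, ← pow_add, inv_mul_eq_one₀ (pow_ne_zero _ two_ne_zero)] at h
    exact Nat.pow_right_injective le_rfl (by exact_mod_cast h)
  · have hζ := Complex.isPrimitiveRoot_exp (p - q) (by omega)
    have hζ0 := hζ.ne_zero (by omega)
    have h := hweight 1 (Units.mk0 _ hζ0) hζ.pow_eq_one
    simp only [weight, Matrix.cons_val, Units.val_inv_eq_inv_val, Units.val_mk0, Units.val_one,
      inv_one, one_pow, one_mul, mul_one, inv_pow, ← pow_mul] at h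
    rw [inv_mul_eq_one₀ (pow_ne_zero _ hζ0)] at h
    simpa using dvd_sub_comm.mp (hζ.intCast_dvd_sub_of_pow_eq_pow (by omega) h)

end Invariance

theorem exists_generator_exponents {p q n c d : ℕ} (hqp : q < p)
    (hdeg : p * n = (p + q) * c + (p - q) * d) (hdvd : ((p - q : ℕ) : ℤ) ∣ n - 2 * c) :
    ∃ k t s : ℕ, n = 2 * k + (p + q) * t + (p - q) * s ∧ c = k + p * t ∧ d = k + p * s := by
  obtain ⟨r, hr⟩ := hdvd
  have hpq : ((p - q : ℕ) : ℤ) ≠ 0 := by omega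
  zify [hqp.le] at hdeg hr hpq ⊢
  have hdc : (d : ℤ) - c = p * r :=
    mul_left_cancel₀ hpq (by linear_combination p * hr - hdeg)
  rcases le_total 0 r with hr0 | hr0
  · lift r to ℕ using hr0
    exact ⟨c, 0, r, by linear_combination hr, by ring, by linear_combination hdc⟩
  · obtain ⟨t, rfl⟩ := Int.exists_eq_neg_ofNat hr0
    exact ⟨d, t, 0, by linear_combination hr - 2 * hdc, by linear_combination -hdc, by ring⟩

theorem mul_pow_mem_of_forall_mul_mem {S : Type*} [SetLike S B] [SubmonoidClass S B] {A : S}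
    {r : ℕ} {z : B} (hz : ∀ g ∈ xMonomials r, g * z ∈ A) :
    ∀ k, ∀ f ∈ xMonomials (r * k), f * z ^ k ∈ A
  | 0, f, hf => by
    obtain ⟨α, rfl⟩ := hf
    simp only [pow_zero, mul_one]
    exact one_mem A
  | k + 1, f, hf => by
    obtain ⟨g, hg, h, hh, rfl⟩ := exists_mul_of_mem_xMonomials_add hf
    rw [pow_succ, mul_mul_mul_comm]
    exact mul_mem (mul_pow_mem_of_forall_mul_mem hz k g hg) (hz h hh)

theorem mul_y1_pow_mul_y2_pow_mem_adjoin {p q n c d : ℕ} (hqp : q < p)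
    (hdeg : p * n = (p + q) * c + (p - q) * d) (hdvd : ((p - q : ℕ) : ℤ) ∣ n - 2 * c) {f : B}
    (hf : f ∈ xMonomials n) : f * y1 ^ c * y2 ^ d ∈ Algebra.adjoin ℂ (generators p q) := by
  set A := Algebra.adjoin ℂ (generators p q)
  obtain ⟨k, t, s, rfl, rfl, rfl⟩ := exists_generator_exponents hqp hdeg hdvd
  obtain ⟨f', hf', f₂, hf₂, rfl⟩ := exists_mul_of_mem_xMonomials_add hf
  obtain ⟨f₀, hf₀, f₁, hf₁, rfl⟩ := exists_mul_of_mem_xMonomials_add hf'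
  have h₀ : f₀ * (y1 * y2) ^ k ∈ A := mul_pow_mem_of_forall_mul_mem (fun _ ⟨α, hα⟩ =>
    Algebra.subset_adjoin (Or.inl (Or.inl ⟨α, by rw [hα, x_mul_x_mul_y1_mul_y2]⟩))) k f₀ hf₀
  have h₁ : f₁ * (y1 ^ p) ^ t ∈ A := mul_pow_mem_of_forall_mul_mem (fun _ ⟨α, hα⟩ =>
    Algebra.subset_adjoin (Or.inl (Or.inr ⟨α, by rw [hα, mul_comm]⟩))) t f₁ hf₁
  have h₂ : f₂ * (y2 ^ p) ^ s ∈ A := mul_pow_mem_of_forall_mul_mem (fun _ ⟨α, hα⟩ =>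
    Algebra.subset_adjoin (Or.inr ⟨α, by rw [hα, mul_comm]⟩)) s f₂ hf₂
  convert mul_mem (mul_mem h₀ h₁) h₂ using 1
  ring

theorem monomial_eq_C_mul_x_y (m : Fin 4 →₀ ℕ) (r : ℂ) :
    (monomial m r : B) = C r * (x 0 ^ m 0 * x 1 ^ m 1 * y1 ^ m 2 * y2 ^ m 3) := by
  rw [monomial_eq, Finsupp.prod_fintype _ _ fun _ => pow_zero _, Fin.prod_univ_four]
  rfl

/-- For `p > q ≥ 0`, the invariant subring of `B = ℂ[x₁,x₂,y₁,y₂]`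
under the torus action `(x₁,x₂,y₁,y₂) ↦ (λ^{-p}ω^{-1}x₁, λ^{-p}ω^{-1}x₂, λ^{p+q}ω²y₁,
λ^{p-q}y₂)`, where `(λ,ω) ∈ ℂ* × ℤ/(p−q)ℤ` (i.e. `ω^{p-q} = 1`), equals the subalgebra
generated by the monomials `x_{α₁}x_{α₂}y₁y₂`, `y₁^p ∏_{ℓ=1}^{p+q} x_{α_ℓ}`, and
`y₂^p ∏_{ℓ=1}^{p−q} x_{α_ℓ}`, over all choices of indices `α_ℓ ∈ {1,2}`. -/
theorem stmt14 (p q : ℕ) (hpq : q < p) :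
    {f : B | ∀ (u w : ℂˣ), ((w : ℂ)) ^ (p - q) = 1 → act p q u w f = f} =
      (Algebra.adjoin ℂ
        ({f : B | ∃ α : Fin 2 → Fin 2, f = x (α 0) * x (α 1) * y1 * y2} ∪
         {f : B | ∃ α : Fin (p + q) → Fin 2, f = y1 ^ p * ∏ ℓ, x (α ℓ)} ∪
         {f : B | ∃ α : Fin (p - q) → Fin 2, f = y2 ^ p * ∏ ℓ, x (α ℓ)}) : Set B) := by
  change _ = (Algebra.adjoin ℂ (generators p q) : Set B)
  ext f
  refine ⟨fun hf => ?_, fun hf u w hw => adjoin_generators_le_equalizer hpq.le hw hf⟩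
  rw [SetLike.mem_coe, f.as_sum]
  refine Subalgebra.sum_mem _ fun m hm => ?_
  obtain ⟨hdeg, hdvd⟩ := exponents_of_mem_support hpq hf hm
  rw [monomial_eq_C_mul_x_y, ← algebraMap_eq]
  exact mul_mem (Subalgebra.algebraMap_mem _ _) (mul_y1_pow_mul_y2_pow_mem_adjoin hpq hdeg hdvd
    (x_zero_pow_mul_x_one_pow_mem_xMonomials _ _))

end Stmt14
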